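/- Let μ ∈ ℝ and σ > 0. Then E(x) = 2((x−μ)₊)²/σ² is a precise e-variable for H_US(μ,σ): (i) ∫ 2((x−μ)₊)²/σ² dQ(x) ≤ 1 for every Q ∈ H_US(μ,σ); and (ii) for every Q ∈ H_US(μ,σ) with mean exactly μ and variance exactly σ² (for instance the uniform distribution on [μ−√3σ, μ+√3σ]) one has ∫ 2((x−μ)₊)²/σ² dQ(x) = 1, so sup_{Q∈H_US(μ,σ)} ∫ 2((x−μ)₊)²/σ² dQ(x) = 1. -/

import Mathlib

open MeasureTheory Set
open scoped ENNReal

/-- Mean of a distribution on ℝ. -/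
noncomputable def distMean (Q : Measure ℝ) : ℝ := ∫ x, x ∂Q

/-- Variance of a distribution on ℝ. -/
noncomputable def distVar (Q : Measure ℝ) : ℝ := ∫ x, (x - distMean Q)^2 ∂Q

/-- `H(μ,σ)`: Borel probability measures on ℝ with finite second moment,
mean at most `μ`, and variance at most `σ²`. -/
def MemH (μ σ : ℝ) (Q : Measure ℝ) : Prop :=
  IsProbabilityMeasure Q ∧ Integrable (fun x => x^2) Q ∧
    distMean Q ≤ μ ∧ distVar Q ≤ σ^2

/-- A distribution `Q` with mean `m` is symmetric if
`Q((-∞, m−x]) = Q([m+x, ∞))` for all `x`. -/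
def IsSymmetricDist (Q : Measure ℝ) : Prop :=
  ∀ x : ℝ, Q (Iic (distMean Q - x)) = Q (Ici (distMean Q + x))

/-- A distribution on ℝ is unimodal: for some `x₀` it is a nonnegative multiple of
the Dirac mass at `x₀` plus a measure with a Lebesgue density that is nondecreasing
on `(-∞, x₀)` and nonincreasing on `(x₀, ∞)`. -/
def Unimodal (Q : Measure ℝ) : Prop :=
  ∃ (x₀ : ℝ) (c : ℝ≥0∞) (f : ℝ → ℝ≥0∞),
    Q = c • Measure.dirac x₀ + volume.withDensity f ∧
    MonotoneOn f (Iio x₀) ∧ AntitoneOn f (Ioi x₀)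

/-- The uniform distribution on `[μ − √3 σ, μ + √3 σ]`. -/
noncomputable def uniformU (μ σ : ℝ) : Measure ℝ :=
  ENNReal.ofReal (2 * Real.sqrt 3 * σ)⁻¹ •
    volume.restrict (Icc (μ - Real.sqrt 3 * σ) (μ + Real.sqrt 3 * σ))

/-! If `Q` is symmetric about its mean `m`, the reflection `x ↦ 2m - x` preserves `Q` and swaps
`(x - m)₊²` with `(m - x)₊²`; these two add up to `(x - m)²`, so `2 ∫ (x - m)₊² dQ = Var Q`.
Since `(x - μ)₊ ≤ (x - m)₊` for `m ≤ μ`, the e-value `∫ 2 (x - μ)₊² / σ² dQ` is at most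
`Var Q / σ² ≤ 1`, with equality when `m = μ` and `Var Q = σ²`, as for the uniform distribution. -/

section Reflection

variable {Q : Measure ℝ} {m : ℝ}

lemma map_reflect_eq_self [IsFiniteMeasure Q] (h : ∀ x, Q (Iic (m - x)) = Q (Ici (m + x))) :
    Q.map (fun x => 2 * m - x) = Q := by
  have hmeas : Measurable fun x : ℝ => 2 * m - x := by fun_prop
  have : IsFiniteMeasure (Q.map fun x => 2 * m - x) := Measure.isFiniteMeasure_map _ _
  refine Measure.ext_of_Iic _ _ fun a => ?_
  have hpre : (fun x : ℝ => 2 * m - x) ⁻¹' Iic a = Ici (m + (m - a)) := by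
    ext x; simp only [mem_preimage, mem_Iic, mem_Ici]; constructor <;> intro <;> linarith
  rw [Measure.map_apply hmeas measurableSet_Iic, hpre, ← h, sub_sub_cancel]

lemma integrable_sub_sq [IsFiniteMeasure Q] (h2 : Integrable (fun x => x ^ 2) Q) (a : ℝ) :
    Integrable (fun x => (x - a) ^ 2) Q := by
  refine ((h2.const_mul 2).add (integrable_const (2 * a ^ 2))).mono' (by fun_prop)
    (.of_forall fun x => ?_)
  rw [Real.norm_eq_abs, abs_of_nonneg (sq_nonneg _)]
  simp only [Pi.add_apply]
  nlinarith [sq_nonneg (x + a)]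

lemma integrable_max_sub_zero_sq (h : Integrable (fun x => (x - m) ^ 2) Q) :
    Integrable (fun x => max (x - m) 0 ^ 2) Q :=
  h.mono' (by fun_prop) <| .of_forall fun x => by
    rw [Real.norm_eq_abs, abs_of_nonneg (sq_nonneg _)]
    rcases le_total (x - m) 0 with hx | hx
    · simp [max_eq_right hx, sq_nonneg]
    · rw [max_eq_left hx]

lemma two_mul_integral_max_sub_zero_sq_eq (hmap : Q.map (fun x => 2 * m - x) = Q)
    (h : Integrable (fun x => (x - m) ^ 2) Q) :
    2 * ∫ x, max (x - m) 0 ^ 2 ∂Q = ∫ x, (x - m) ^ 2 ∂Q := by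
  set f : ℝ → ℝ := fun x => max (x - m) 0 ^ 2
  have hmeas : AEMeasurable (fun x : ℝ => 2 * m - x) Q := by fun_prop
  have hf : Integrable f Q := integrable_max_sub_zero_sq h
  have hfmap : StronglyMeasurable f := by fun_prop
  have hf_refl : Integrable (fun x => f (2 * m - x)) Q := by
    rw [← hmap] at hf
    exact (integrable_map_measure hfmap.aestronglyMeasurable hmeas).1 hf
  have h_refl : ∫ x, f (2 * m - x) ∂Q = ∫ x, f x ∂Q := by
    rw [← integral_map hmeas hfmap.aestronglyMeasurable, hmap]
  have h_split : ∀ x, f x + f (2 * m - x) = (x - m) ^ 2 := fun x => by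
    rcases le_total m x with hx | hx
    · simp only [f, max_eq_left (sub_nonneg.2 hx), max_eq_right (by linarith : 2 * m - x - m ≤ 0)]
      ring
    · simp only [f, max_eq_right (sub_nonpos.2 hx), max_eq_left (by linarith : 0 ≤ 2 * m - x - m)]
      ring
  rw [← integral_congr_ae (.of_forall h_split), integral_add hf hf_refl, h_refl, two_mul]

end Reflection

section Symmetric

variable {Q : Measure ℝ} [IsFiniteMeasure Q]

lemma IsSymmetricDist.two_mul_integral_max_sub_distMean_zero_sq (hs : IsSymmetricDist Q)
    (h2 : Integrable (fun x => x ^ 2) Q) :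
    2 * ∫ x, max (x - distMean Q) 0 ^ 2 ∂Q = distVar Q :=
  two_mul_integral_max_sub_zero_sq_eq (map_reflect_eq_self hs) (integrable_sub_sq h2 _)

lemma IsSymmetricDist.two_mul_integral_max_sub_zero_sq_le {μ : ℝ} (hs : IsSymmetricDist Q)
    (h2 : Integrable (fun x => x ^ 2) Q) (hμ : distMean Q ≤ μ) :
    2 * ∫ x, max (x - μ) 0 ^ 2 ∂Q ≤ distVar Q := by
  rw [← hs.two_mul_integral_max_sub_distMean_zero_sq h2]
  gcongr 2 * ?_
  refine integral_mono (integrable_max_sub_zero_sq (integrable_sub_sq h2 _))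
    (integrable_max_sub_zero_sq (integrable_sub_sq h2 _)) fun x => ?_
  dsimp only
  gcongr

end Symmetric

lemma integral_two_mul_max_sub_zero_sq_div (Q : Measure ℝ) (μ σ : ℝ) :
    ∫ x, 2 * max (x - μ) 0 ^ 2 / σ ^ 2 ∂Q = 2 * (∫ x, max (x - μ) 0 ^ 2 ∂Q) / σ ^ 2 := by
  rw [integral_div, integral_const_mul]

noncomputable def centeredUniform (μ t : ℝ) : Measure ℝ :=
  ENNReal.ofReal (2 * t)⁻¹ • volume.restrict (Icc (μ - t) (μ + t))

lemma uniformU_eq_centeredUniform (μ σ : ℝ) :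
    uniformU μ σ = centeredUniform μ (Real.sqrt 3 * σ) := by
  rw [uniformU, centeredUniform, mul_assoc]

namespace centeredUniform

variable {μ t : ℝ}

lemma isProbabilityMeasure (ht : 0 < t) : IsProbabilityMeasure (centeredUniform μ t) := by
  constructor
  rw [centeredUniform, Measure.smul_apply, Measure.restrict_apply_univ, Real.volume_Icc,
    smul_eq_mul, ← ENNReal.ofReal_mul (by positivity), show μ + t - (μ - t) = 2 * t by ring,
    inv_mul_cancel₀ (by positivity), ENNReal.ofReal_one]

lemma integral_eq (ht : 0 ≤ t) (f : ℝ → ℝ) :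
    ∫ x, f x ∂centeredUniform μ t = (2 * t)⁻¹ * ∫ x in (μ - t)..(μ + t), f x := by
  rw [centeredUniform, integral_smul_measure, ENNReal.toReal_ofReal (by positivity),
    integral_Icc_eq_integral_Ioc, ← intervalIntegral.integral_of_le (by linarith), smul_eq_mul]

lemma distMean_eq (ht : 0 < t) : distMean (centeredUniform μ t) = μ := by
  rw [distMean, integral_eq ht.le, integral_id]
  field_simp
  ring

lemma distVar_eq (ht : 0 < t) : distVar (centeredUniform μ t) = t ^ 2 / 3 := by
  rw [distVar, distMean_eq ht, integral_eq ht.le,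
    intervalIntegral.integral_comp_sub_right (fun x => x ^ 2), sub_sub_cancel_left,
    add_sub_cancel_left, integral_pow]
  field_simp
  ring

lemma integrable_sq : Integrable (fun x => x ^ 2) (centeredUniform μ t) :=
  (continuous_pow 2).integrableOn_Icc.integrable.smul_measure ENNReal.ofReal_ne_top

lemma isSymmetricDist (ht : 0 < t) : IsSymmetricDist (centeredUniform μ t) := by
  intro x
  have h_left : Iic (μ - x) ∩ Icc (μ - t) (μ + t) = Icc (μ - t) (min (μ - x) (μ + t)) := by
    ext; simp only [mem_inter_iff, mem_Iic, mem_Icc, le_min_iff]; tauto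
  have h_right : Ici (μ + x) ∩ Icc (μ - t) (μ + t) = Icc (max (μ + x) (μ - t)) (μ + t) := by
    ext; simp only [mem_inter_iff, mem_Ici, mem_Icc, max_le_iff]; tauto
  have h_length : min (μ - x) (μ + t) - (μ - t) = μ + t - max (μ + x) (μ - t) := by
    simp only [min_def, max_def]; split_ifs <;> linarith
  rw [distMean_eq ht, centeredUniform, Measure.smul_apply, Measure.smul_apply,
    Measure.restrict_apply measurableSet_Iic, Measure.restrict_apply measurableSet_Ici,
    h_left, h_right, Real.volume_Icc, Real.volume_Icc, h_length]

lemma unimodal : Unimodal (centeredUniform μ t) := by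
  refine ⟨μ, 0, (Icc (μ - t) (μ + t)).indicator fun _ => ENNReal.ofReal (2 * t)⁻¹, ?_, ?_, ?_⟩
  · rw [withDensity_indicator measurableSet_Icc, withDensity_const, zero_smul, zero_add,
      centeredUniform]
  · intro x _ y hy hxy
    by_cases hx : x ∈ Icc (μ - t) (μ + t)
    · have hy' : y ∈ Icc (μ - t) (μ + t) := ⟨hx.1.trans hxy, by linarith [mem_Iio.1 hy, hx.1]⟩
      rw [indicator_of_mem hx, indicator_of_mem hy']
    · simp [indicator_of_notMem hx]
  · intro x hx y _ hxy
    by_cases hy : y ∈ Icc (μ - t) (μ + t)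
    · have hx' : x ∈ Icc (μ - t) (μ + t) := ⟨by linarith [mem_Ioi.1 hx, hy.2], hxy.trans hy.2⟩
      rw [indicator_of_mem hy, indicator_of_mem hx']
    · simp [indicator_of_notMem hy]

end centeredUniform
section UniformU

variable {μ σ : ℝ}

lemma distMean_uniformU (hσ : 0 < σ) : distMean (uniformU μ σ) = μ := by
  rw [uniformU_eq_centeredUniform, centeredUniform.distMean_eq (by positivity)]

lemma distVar_uniformU (hσ : 0 < σ) : distVar (uniformU μ σ) = σ ^ 2 := by
  rw [uniformU_eq_centeredUniform, centeredUniform.distVar_eq (by positivity), mul_pow,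
    Real.sq_sqrt (by norm_num)]
  ring

lemma memH_uniformU (hσ : 0 < σ) : MemH μ σ (uniformU μ σ) := by
  refine ⟨?_, ?_, (distMean_uniformU hσ).le, (distVar_uniformU hσ).le⟩ <;>
    rw [uniformU_eq_centeredUniform]
  exacts [centeredUniform.isProbabilityMeasure (by positivity), centeredUniform.integrable_sq]

lemma isSymmetricDist_uniformU (hσ : 0 < σ) : IsSymmetricDist (uniformU μ σ) := by
  rw [uniformU_eq_centeredUniform]
  exact centeredUniform.isSymmetricDist (by positivity)

lemma unimodal_uniformU : Unimodal (uniformU μ σ) := by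
  rw [uniformU_eq_centeredUniform]
  exact centeredUniform.unimodal

end UniformU

/-- `E(x) = 2((x−μ)₊)²/σ²` is a precise e-variable for `H_US(μ,σ)`:
(i) `∫ E dQ ≤ 1` for all `Q ∈ H_US(μ,σ)`; (ii) `∫ E dQ = 1` for every
`Q ∈ H_US(μ,σ)` with mean exactly `μ` and variance exactly `σ²`, for instance the
uniform distribution on `[μ−√3σ, μ+√3σ]`; hence the sup equals `1`. -/
theorem stmt_16 (μ σ : ℝ) (hσ : 0 < σ) :
    (∀ Q : Measure ℝ, MemH μ σ Q → IsSymmetricDist Q → Unimodal Q →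
      ∫ x, 2 * (max (x - μ) 0)^2 / σ^2 ∂Q ≤ 1) ∧
    (∀ Q : Measure ℝ, MemH μ σ Q → IsSymmetricDist Q → Unimodal Q →
      distMean Q = μ → distVar Q = σ^2 →
      ∫ x, 2 * (max (x - μ) 0)^2 / σ^2 ∂Q = 1) ∧
    (MemH μ σ (uniformU μ σ) ∧ IsSymmetricDist (uniformU μ σ) ∧
      Unimodal (uniformU μ σ) ∧ distMean (uniformU μ σ) = μ ∧
      distVar (uniformU μ σ) = σ^2 ∧
      ∫ x, 2 * (max (x - μ) 0)^2 / σ^2 ∂(uniformU μ σ) = 1) ∧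
    IsLUB {r : ℝ | ∃ Q : Measure ℝ, MemH μ σ Q ∧ IsSymmetricDist Q ∧ Unimodal Q ∧
      r = ∫ x, 2 * (max (x - μ) 0)^2 / σ^2 ∂Q} 1 := by
  have h_le : ∀ Q : Measure ℝ, MemH μ σ Q → IsSymmetricDist Q → Unimodal Q →
      ∫ x, 2 * (max (x - μ) 0)^2 / σ^2 ∂Q ≤ 1 := by
    rintro Q ⟨_, h2, hμ, hvar⟩ hs -
    rw [integral_two_mul_max_sub_zero_sq_div, div_le_one (by positivity)]
    exact (hs.two_mul_integral_max_sub_zero_sq_le h2 hμ).trans hvar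
  have h_eq : ∀ Q : Measure ℝ, MemH μ σ Q → IsSymmetricDist Q → Unimodal Q →
      distMean Q = μ → distVar Q = σ^2 →
      ∫ x, 2 * (max (x - μ) 0)^2 / σ^2 ∂Q = 1 := by
    rintro Q ⟨_, h2, -, -⟩ hs - hμ hvar
    rw [integral_two_mul_max_sub_zero_sq_div, ← hμ, hs.two_mul_integral_max_sub_distMean_zero_sq h2, hvar,
      div_self (by positivity)]
  have h_uniform := h_eq _ (memH_uniformU hσ) (isSymmetricDist_uniformU hσ) unimodal_uniformU
    (distMean_uniformU hσ) (distVar_uniformU hσ)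
  refine ⟨h_le, h_eq, ⟨memH_uniformU hσ, isSymmetricDist_uniformU hσ, unimodal_uniformU,
    distMean_uniformU hσ, distVar_uniformU hσ, h_uniform⟩, ?_, ?_⟩
  · rintro r ⟨Q, hQ, hs, hu, rfl⟩
    exact h_le Q hQ hs hu
  · exact fun b hb => hb ⟨uniformU μ σ, memH_uniformU hσ, isSymmetricDist_uniformU hσ,
      unimodal_uniformU, h_uniform.symm⟩
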